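/- Let X be a topological space with a probability measure μ, and let V be a finite-dimensional vector space of continuous functions X → ℝ containing all constant functions. Let A ⊆ X be closed. Then every f ∈ V with ∫_X f dμ = 0 changes sign on A if and only if there is a finitely supported function w : A → [0,1] such that ∫_X g dμ = Σ_{a ∈ A} w(a) g(a) for every g ∈ V. -/

import Mathlib

/-!
Let `Φ x ∈ V*` be evaluation at `x` and `L ∈ V*` integration against `μ`. A cubature rule on `A`
is exactly a representation of `L` as a convex combination of the `Φ a`, `a ∈ A`. Subtracting
constants, the sign-change condition says that no `f ∈ V` satisfies `f(a) < ∫ f dμ` for all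
`a ∈ A`, i.e. that no functional on `V*` strictly separates `L` from the compact set `Φ(A)`.
Since `V*` is finite-dimensional, the convex hull of `Φ(A)` is compact (Carathéodory), so
Hahn–Banach turns this into `L ∈ conv Φ(A)`.
-/

open MeasureTheory Set

section ConvexHull

variable {E : Type*} [AddCommGroup E] [Module ℝ E]

theorem convexHull_eq_biUnion_image_stdSimplex [FiniteDimensional ℝ E] (K : Set E) :
    convexHull ℝ K = ⋃ k ∈ Finset.range (Module.finrank ℝ E + 2),
      (fun p : (Fin k → ℝ) × (Fin k → E) => ∑ i, p.1 i • p.2 i) ''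
        (stdSimplex ℝ (Fin k) ×ˢ univ.pi fun _ => K) := by
  refine Subset.antisymm (fun x hx => ?_) ?_
  · obtain ⟨ι, _, z, w, hzK, hz, hw0, hw1, rfl⟩ := eq_pos_convex_span_of_mem_convexHull hx
    have hcard : Fintype.card ι < Module.finrank ℝ E + 2 :=
      Nat.lt_succ_of_le (hz.card_le_finrank_succ.trans (by gcongr; exact Submodule.finrank_le _))
    set e := (Fintype.equivFin ι).symm
    refine mem_biUnion (Finset.mem_range.2 hcard) ⟨(w ∘ e, z ∘ e), ⟨⟨fun i => (hw0 _).le, ?_⟩,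
      fun i _ => hzK (mem_range_self _)⟩, e.sum_comp fun i => w i • z i⟩
    simpa [e.sum_comp] using hw1
  · refine iUnion₂_subset fun k _ => ?_
    rintro _ ⟨⟨w, z⟩, ⟨hw, hz⟩, rfl⟩
    exact mem_convexHull_of_exists_fintype w z hw.1 hw.2 (fun i => hz i trivial) rfl

variable [TopologicalSpace E] [ContinuousSMul ℝ E]

theorem IsCompact.convexHull [ContinuousAdd E] [FiniteDimensional ℝ E] {K : Set E}
    (hK : IsCompact K) :
    IsCompact (convexHull ℝ K) := by
  rw [convexHull_eq_biUnion_image_stdSimplex]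
  refine (Finset.range _).isCompact_biUnion fun k _ => ?_
  exact ((isCompact_stdSimplex ℝ _).prod (isCompact_univ_pi fun _ => hK)).image (by fun_prop)

theorem mem_convexHull_of_forall_exists_le [FiniteDimensional ℝ E] [T2Space E]
    [IsTopologicalAddGroup E] [LocallyConvexSpace ℝ E] {K : Set E} (hK : IsCompact K) {x : E}
    (h : ∀ ℓ : StrongDual ℝ E, ∃ y ∈ K, ℓ x ≤ ℓ y) : x ∈ convexHull ℝ K := by
  by_contra hx
  obtain ⟨ℓ, u, hlt, hu⟩ := geometric_hahn_banach_closed_point (convex_convexHull ℝ K)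
    hK.convexHull.isClosed hx
  obtain ⟨y, hy, hle⟩ := h ℓ
  exact (hlt y (subset_convexHull ℝ K hy)).not_ge (hu.le.trans hle)

end ConvexHull

theorem Module.Dual.mem_convexHull_image_of_forall_exists_le {V : Type*} [AddCommGroup V]
    [Module ℝ V] [FiniteDimensional ℝ V] {X : Type*} [TopologicalSpace X] {A : Set X}
    (hA : IsCompact A) {Φ : X → Module.Dual ℝ V} (hΦ : ∀ v, Continuous fun x => Φ x v)
    {L : Module.Dual ℝ V} (h : ∀ v, ∃ x ∈ A, L v ≤ Φ x v) : L ∈ convexHull ℝ (Φ '' A) := by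
  -- In the weak topology `σ(V*, V)` the continuous functionals on `V*` are the evaluations.
  let B : Module.Dual ℝ V →ₗ[ℝ] V →ₗ[ℝ] ℝ := LinearMap.id
  have : FiniteDimensional ℝ (WeakBilin B) :=
    inferInstanceAs (FiniteDimensional ℝ (Module.Dual ℝ V))
  have : T2Space (WeakBilin B) := (WeakBilin.isEmbedding (B := B) Function.injective_id).t2Space
  have hΦc : Continuous (Y := WeakBilin B) Φ := WeakBilin.continuous_of_continuous_eval B hΦ
  refine mem_convexHull_of_forall_exists_le (E := WeakBilin B) (hA.image hΦc) fun ℓ => ?_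
  obtain ⟨v, rfl⟩ := LinearMap.dualEmbedding_surjective B ℓ
  obtain ⟨x, hx, hle⟩ := h v
  exact ⟨Φ x, mem_image_of_mem _ hx, hle⟩

theorem exists_finset_sum_smul_eq_of_mem_convexHull_image {α E : Type*} [AddCommGroup E]
    [Module ℝ E] {f : α → E} {s : Set α} {x : E} (hx : x ∈ convexHull ℝ (f '' s)) :
    ∃ (t : Finset α) (w : α → ℝ), ↑t ⊆ s ∧ (∀ a, 0 ≤ w a ∧ w a ≤ 1) ∧
      ∑ a ∈ t, w a = 1 ∧ ∑ a ∈ t, w a • f a = x := by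
  classical
  rw [convexHull_eq_union_convexHull_finite_subsets] at hx
  simp only [mem_iUnion] at hx
  obtain ⟨_, hsurj, hxt⟩ := hx
  obtain ⟨t, hts, hinj, rfl⟩ := Finset.exists_subset_injOn_image_eq_of_surjOn s _ hsurj
  obtain ⟨w, hw0, hw1, rfl⟩ := Finset.mem_convexHull'.1 hxt
  set w' : α → ℝ := fun a => if a ∈ t then w (f a) else 0
  have hw' : ∀ a ∈ t, w' a = w (f a) := fun a ha => if_pos ha
  have hw'0 : ∀ a, 0 ≤ w' a := fun a => by
    by_cases ha : a ∈ t
    · exact (hw' a ha).symm ▸ hw0 _ (Finset.mem_image_of_mem f ha)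
    · simp [w', ha]
  have hw'1 : ∑ a ∈ t, w' a = 1 := by
    rw [Finset.sum_congr rfl hw', ← Finset.sum_image hinj, hw1]
  refine ⟨t, w', hts, fun a => ⟨hw'0 a, ?_⟩, hw'1, ?_⟩
  · by_cases ha : a ∈ t
    · exact hw'1 ▸ Finset.single_le_sum (fun b _ => hw'0 b) ha
    · simp [w', ha]
  · rw [Finset.sum_image hinj]
    exact Finset.sum_congr rfl fun a ha => by rw [hw' a ha]

theorem Finset.exists_nonneg_of_sum_mul_eq_zero {ι : Type*} {s : Finset ι} {w f : ι → ℝ}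
    (hw : ∀ i ∈ s, 0 ≤ w i) (hw1 : ∑ i ∈ s, w i ≠ 0) (h : ∑ i ∈ s, w i * f i = 0) :
    ∃ i ∈ s, 0 ≤ f i := by
  by_contra! hf
  have hwf := (Finset.sum_eq_zero_iff_of_nonpos fun i hi =>
    mul_nonpos_of_nonneg_of_nonpos (hw i hi) (hf i hi).le).1 h
  refine hw1 (Finset.sum_eq_zero fun i hi => ?_)
  simpa [(hf i hi).ne] using hwf i hi

/-- Sign changes on `A` of all zero-mean functions in `V` are equivalent to the
existence of a cubature rule supported on `A`. -/
theorem sign_change_iff_cubature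
    {X : Type*} [MetricSpace X] [CompactSpace X] [MeasurableSpace X]
    [BorelSpace X] (μ : Measure X) [IsProbabilityMeasure μ]
    (V : Submodule ℝ C(X, ℝ)) (hV : FiniteDimensional ℝ V)
    (hconst : ∀ c : ℝ, (ContinuousMap.const X c) ∈ V)
    (A : Set X) (hA : IsClosed A) :
    (∀ f ∈ V, ∫ x, f x ∂μ = 0 → (∃ x ∈ A, 0 ≤ f x) ∧ (∃ y ∈ A, f y ≤ 0)) ↔
      (∃ (s : Finset X) (w : X → ℝ), ↑s ⊆ A ∧ (∀ x, 0 ≤ w x ∧ w x ≤ 1) ∧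
        ∀ g ∈ V, ∫ x, g x ∂μ = ∑ a ∈ s, w a * g a) := by
  have hint (g : C(X, ℝ)) : Integrable g μ :=
    g.continuous.integrable_of_hasCompactSupport (.of_compactSpace g)
  constructor
  · intro h
    let Φ : X → Module.Dual ℝ V := fun x => (ContinuousMap.evalCLM ℝ x).toLinearMap ∘ₗ V.subtype
    let L : Module.Dual ℝ V :=
      { toFun g := ∫ x, g.1 x ∂μ
        map_add' f g := integral_add (hint f) (hint g)
        map_smul' c g := integral_const_mul c _ }
    have hL : ∀ v, ∃ x ∈ A, L v ≤ Φ x v := fun v => by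
      obtain ⟨x, hx, hv⟩ := (h _ (sub_mem v.2 (hconst (L v))) (by
        simp [L, integral_sub (hint _) (integrable_const _)])).1
      exact ⟨x, hx, by simpa [Φ, sub_nonneg] using hv⟩
    obtain ⟨s, w, hsA, hw, -, hsum⟩ := exists_finset_sum_smul_eq_of_mem_convexHull_image
      (Module.Dual.mem_convexHull_image_of_forall_exists_le hA.isCompact
        (fun v => v.1.continuous) hL)
    refine ⟨s, w, hsA, hw, fun g hg => ?_⟩
    simpa [Φ, L] using (LinearMap.congr_fun hsum ⟨g, hg⟩).symm
  · rintro ⟨s, w, hsA, hw, hrule⟩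
    have hw1 : ∑ a ∈ s, w a = 1 := by simpa using (hrule _ (hconst 1)).symm
    have hnonneg : ∀ g ∈ V, ∫ x, g x ∂μ = 0 → ∃ x ∈ A, 0 ≤ g x := fun g hg hg0 => by
      obtain ⟨a, ha, hga⟩ := Finset.exists_nonneg_of_sum_mul_eq_zero (fun a _ => (hw a).1)
        (hw1 ▸ one_ne_zero) ((hrule g hg).symm.trans hg0)
      exact ⟨a, hsA ha, hga⟩
    refine fun f hf hf0 => ⟨hnonneg f hf hf0, ?_⟩
    obtain ⟨y, hy, hfy⟩ := hnonneg (-f) (neg_mem hf) (by simp [integral_neg, hf0])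
    exact ⟨y, hy, by simpa using hfy⟩
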